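/- arXiv:2604.02653 — 8 statements merged into one kernel-verified Lean document; each statement's English description precedes it below -/
import Mathlib

section
/- Define the binary cross entropy loss with soft label q ∈ [0,1] by BCE_q(z) = −[q·log σ(z) + (1−q)·log(1−σ(z))], where σ(z) = 1/(1+e^{−z}) is the sigmoid function. Then for all q ∈ [0,1] and all z ∈ ℝ, the product-stability α_{BCE_q}(z) = 3(BCE_q'''(z))² − BCE_q''''(z)·BCE_q''(z) is strictly positive. -/
/-!
With `s = σ(z)` and `p = s(1 - s)`, one has `BCE_q' = s - q` and `σ' = p`, so
`BCE_q'' = p`, `BCE_q''' = p(1 - 2s)` and `BCE_q'''' = p(1 - 6p)`, none depending on `q`.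
Since `(1 - 2s)² = 1 - 4p`, the product-stability is `2p²(1 - 3p)`, positive because
`0 < p ≤ 1/4`.
-/

/-- The sigmoid function `σ(z) = 1/(1 + e^{-z})`. -/
noncomputable def sigmoid (z : ℝ) : ℝ := 1 / (1 + Real.exp (-z))

/-- Binary cross entropy loss with soft label `q`. -/
noncomputable def BCE (q : ℝ) (z : ℝ) : ℝ :=
  -(q * Real.log (sigmoid z) + (1 - q) * Real.log (1 - sigmoid z))

lemma sigmoid_eq_real_sigmoid : sigmoid = Real.sigmoid := by
  funext z
  rw [sigmoid, Real.sigmoid_def, one_div]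

lemma hasDerivAt_BCE (q z : ℝ) : HasDerivAt (BCE q) (Real.sigmoid z - q) z := by
  have hs := Real.hasDerivAt_sigmoid z
  have hs0 := (Real.sigmoid_pos z).ne'
  have hs1 := (sub_pos.mpr (Real.sigmoid_lt_one z)).ne'
  have h := ((hs.log hs0).const_mul q).add
    ((((hasDerivAt_const z 1).sub hs).log hs1).const_mul (1 - q))
  unfold BCE
  rw [sigmoid_eq_real_sigmoid]
  refine h.neg.congr_deriv ?_
  simp only [Pi.sub_apply]
  field_simp
  ring

lemma iteratedDeriv_two_BCE (q : ℝ) :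
    iteratedDeriv 2 (BCE q) = fun z => Real.sigmoid z * (1 - Real.sigmoid z) := by
  have h : deriv (BCE q) = fun z => Real.sigmoid z - q :=
    funext fun z => (hasDerivAt_BCE q z).deriv
  rw [iteratedDeriv_succ, iteratedDeriv_one, h]
  funext z
  rw [deriv_sub_const, Real.deriv_sigmoid]

lemma iteratedDeriv_three_BCE (q : ℝ) :
    iteratedDeriv 3 (BCE q) =
      fun z => Real.sigmoid z * (1 - Real.sigmoid z) * (1 - 2 * Real.sigmoid z) := by
  rw [iteratedDeriv_succ, iteratedDeriv_two_BCE]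
  funext z
  have hs := Real.hasDerivAt_sigmoid z
  refine ((hs.mul ((hasDerivAt_const z 1).sub hs)).congr_deriv ?_).deriv
  simp only [Pi.sub_apply]
  ring

lemma iteratedDeriv_four_BCE (q : ℝ) :
    iteratedDeriv 4 (BCE q) = fun z => Real.sigmoid z * (1 - Real.sigmoid z) *
      (1 - 6 * (Real.sigmoid z * (1 - Real.sigmoid z))) := by
  rw [iteratedDeriv_succ, iteratedDeriv_three_BCE]
  funext z
  have hs := Real.hasDerivAt_sigmoid z
  have hp := hs.mul ((hasDerivAt_const z 1).sub hs)
  refine ((hp.mul ((hasDerivAt_const z 1).sub (hs.const_mul 2))).congr_deriv ?_).deriv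
  simp only [Pi.mul_apply, Pi.sub_apply]
  ring

lemma product_stability_pos_of_mem_Ioo {s : ℝ} (hs0 : 0 < s) (hs1 : s < 1) :
    0 < 3 * (s * (1 - s) * (1 - 2 * s)) ^ 2 -
      s * (1 - s) * (1 - 6 * (s * (1 - s))) * (s * (1 - s)) := by
  have hp : 0 < s * (1 - s) := mul_pos hs0 (sub_pos.mpr hs1)
  have hp' : 0 < 1 - 3 * (s * (1 - s)) := by nlinarith [sq_nonneg (1 - 2 * s)]
  have key : 3 * (s * (1 - s) * (1 - 2 * s)) ^ 2 -
      s * (1 - s) * (1 - 6 * (s * (1 - s))) * (s * (1 - s)) =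
      2 * (s * (1 - s)) ^ 2 * (1 - 3 * (s * (1 - s))) := by ring
  rw [key]
  positivity

theorem bce_product_stable_general (q : ℝ) (z : ℝ) :
    0 < 3 * (iteratedDeriv 3 (BCE q) z) ^ 2 -
        iteratedDeriv 4 (BCE q) z * iteratedDeriv 2 (BCE q) z := by
  rw [iteratedDeriv_two_BCE, iteratedDeriv_three_BCE, iteratedDeriv_four_BCE]
  exact product_stability_pos_of_mem_Ioo (Real.sigmoid_pos z) (Real.sigmoid_lt_one z)

/-- The binary cross entropy loss is product-stable everywhere. -/
theorem bce_product_stable (q : ℝ) (hq0 : 0 ≤ q) (hq1 : q ≤ 1) (z : ℝ) :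
    0 < 3 * (iteratedDeriv 3 (BCE q) z) ^ 2 -
        iteratedDeriv 4 (BCE q) z * iteratedDeriv 2 (BCE q) z :=
  bce_product_stable_general q z
end

section
/- Let a > 0 and n ≥ 2 be a natural number, and define the multilayer squared loss MLSq_{a,n}(z) = (zⁿ − a)². Then the product-stability of MLSq_{a,n} at its minimum z* = a^{1/n} is strictly positive: α_{MLSq_{a,n}}(a^{1/n}) = 3(MLSq_{a,n}'''(z*))² − MLSq_{a,n}''''(z*)·MLSq_{a,n}''(z*) > 0. -/
/-- The multilayer squared loss `MLSq_{a,n}(z) = (zⁿ − a)²`. -/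
noncomputable def MLSq (a : ℝ) (n : ℕ) (z : ℝ) : ℝ := (z ^ n - a) ^ 2

/-!
At a zero of `g`, Leibniz's rule gives `(g²)'' = 2g'²`, `(g²)''' = 6g'g''` and
`(g²)'''' = 6g''² + 8g'g'''`, so the product-stability of `g²` there is `16g'²(6g''² − g'g''')`.
For `g z = zⁿ − a` at `c = a^{1/n}` we have `cᵏ g⁽ᵏ⁾(c) = n(n−1)⋯(n−k+1) cⁿ`, so the
product-stability times `c⁶` is `16 n⁴ (n − 1)(5n − 4) c⁴ⁿ > 0`.
-/

open Finset

section
variable {𝕜 : Type*} [NontriviallyNormedField 𝕜]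

noncomputable def productStability (f : 𝕜 → 𝕜) (z : 𝕜) : 𝕜 :=
  3 * iteratedDeriv 3 f z ^ 2 - iteratedDeriv 4 f z * iteratedDeriv 2 f z

theorem productStability_sq_of_eq_zero {g : 𝕜 → 𝕜} {x : 𝕜} (hg : ContDiffAt 𝕜 4 g x)
    (hgx : g x = 0) :
    productStability (fun z => g z ^ 2) x =
      16 * deriv g x ^ 2 * (6 * iteratedDeriv 2 g x ^ 2 - deriv g x * iteratedDeriv 3 g x) := by
  have leibniz (k : ℕ) (hk : k ≤ 4) : iteratedDeriv k (fun z => g z ^ 2) x =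
      ∑ i ∈ range (k + 1), k.choose i * iteratedDeriv i g x * iteratedDeriv (k - i) g x := by
    have hgk : ContDiffAt 𝕜 k g x := hg.of_le (by exact_mod_cast hk)
    simp only [sq]
    exact iteratedDeriv_fun_mul hgk hgk
  simp only [productStability, leibniz 2 (by norm_num), leibniz 3 (by norm_num),
    leibniz 4 (by norm_num), sum_range_succ, sum_range_zero, iteratedDeriv_zero, iteratedDeriv_one]
  norm_num [Nat.choose, hgx]
  ring

-- Multiplying by `x ^ k` avoids the truncated exponent `n - k` of `iteratedDeriv_pow`.
theorem pow_mul_iteratedDeriv_pow_sub_const {k : ℕ} (hk : k ≠ 0) (n : ℕ) (a x : 𝕜) :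
    x ^ k * iteratedDeriv k (fun z => z ^ n - a) x = n.descFactorial k * x ^ n := by
  rw [iteratedDeriv_fun_sub (contDiff_id.pow n).contDiffAt contDiffAt_const]
  simp only [iteratedDeriv_pow, iteratedDeriv_const, hk, if_false, sub_zero]
  rcases le_or_gt k n with hkn | hnk
  · rw [mul_left_comm, ← pow_add, Nat.add_sub_cancel' hkn]
  · simp [Nat.descFactorial_eq_zero_iff_lt.mpr hnk]

end

/-- For `a > 0` and `n ≥ 2`, the multilayer squared loss is product-stable
at its minimum `z* = a^{1/n}`. -/
theorem mlsq_product_stable (a : ℝ) (ha : 0 < a) (n : ℕ) (hn : 2 ≤ n) :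
    0 < 3 * (iteratedDeriv 3 (MLSq a n) (a ^ ((1 : ℝ) / n))) ^ 2 -
        iteratedDeriv 4 (MLSq a n) (a ^ ((1 : ℝ) / n)) *
          iteratedDeriv 2 (MLSq a n) (a ^ ((1 : ℝ) / n)) := by
  obtain ⟨m, rfl⟩ : ∃ m, n = m + 2 := ⟨n - 2, by omega⟩
  have hcn : (a ^ ((1 : ℝ) / ↑(m + 2))) ^ (m + 2) = a := by
    rw [one_div, Real.rpow_inv_natCast_pow ha.le (by omega)]
  set c := a ^ ((1 : ℝ) / ↑(m + 2))
  set g := fun z : ℝ => z ^ (m + 2) - a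
  have hc : 0 < c := by positivity
  change 0 < productStability (fun z => g z ^ 2) c
  rw [productStability_sq_of_eq_zero (show ContDiffAt ℝ 4 g c by fun_prop) (sub_eq_zero.2 hcn),
    ← iteratedDeriv_one]
  have h1 := pow_mul_iteratedDeriv_pow_sub_const one_ne_zero (m + 2) a c
  have h2 := pow_mul_iteratedDeriv_pow_sub_const two_ne_zero (m + 2) a c
  have h3 := pow_mul_iteratedDeriv_pow_sub_const three_ne_zero (m + 2) a c
  rw [pow_one] at h1
  refine pos_of_mul_pos_right ?_ (pow_nonneg hc.le 6)
  calc (0 : ℝ) < 16 * (m + 2) ^ 4 * (m + 1) * (5 * m + 6) * (c ^ (m + 2)) ^ 4 := by positivity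
    _ = 16 * (c * iteratedDeriv 1 g c) ^ 2 * (6 * (c ^ 2 * iteratedDeriv 2 g c) ^ 2 -
          (c * iteratedDeriv 1 g c) * (c ^ 3 * iteratedDeriv 3 g c)) := by
      rw [h1, h2, h3]
      norm_num [Nat.descFactorial]
      ring
    _ = _ := by ring
end

section
/- For 0 < a ≤ 1, define l_a(z) = (log(e^{z−1} + 1) + log(e^{1−z} + 1))^a. Then at z = 1 one has l_a''(1) = (a/2)·(2 log 2)^{a−1}, l_a'''(1) = 0, l_a''''(1) = (a/4)·(−(2 log 2)^{a−1} + 3(a−1)·(2 log 2)^{a−2}), and consequently the product-stability satisfies the exact formula α_{l_a}(1) = 3(l_a'''(1))² − l_a''''(1)·l_a''(1) = (a²/8)·(2 log 2)^{2a−3}·(2 log 2 − 3(a−1)), which is strictly positive. -/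
/-!
Since `(e^x + 1)(e^{-x} + 1) = (2 cosh (x/2))²`, the base of `l_a` is `g(z - 1)` with
`g(x) = 2 log (2 cosh (x/2))`, and `g' = tanh (x/2)` satisfies the Riccati equation
`(g')' = (1 - g'²) / 2`. Hence every derivative of `g ^ a` is a polynomial in `g'` with
coefficients powers of `g`. At `x = 0` we have `g' = 0` and `g = 2 log 2`, which gives the
stated values; the product stability is positive because `2 log 2 > 0 ≥ 3 (a - 1)`.
-/

open Real

/- The derivatives of `g ^ a`, written in terms of `G = g` and `t = g'`, for `g` with
`g'' = (1 - g'²) / 2`. -/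
noncomputable def rpowDeriv1 (a G t : ℝ) : ℝ := a * G ^ (a - 1) * t

noncomputable def rpowDeriv2 (a G t : ℝ) : ℝ :=
  a * (a - 1) * G ^ (a - 2) * t ^ 2 + a * G ^ (a - 1) * ((1 - t ^ 2) / 2)

noncomputable def rpowDeriv3 (a G t : ℝ) : ℝ :=
  a * (a - 1) * (a - 2) * G ^ (a - 3) * t ^ 3
    + 3 * a * (a - 1) * G ^ (a - 2) * t * ((1 - t ^ 2) / 2)
    - a * G ^ (a - 1) * (t * (1 - t ^ 2) / 2)

noncomputable def rpowDeriv4 (a G t : ℝ) : ℝ :=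
  a * (a - 1) * (a - 2) * (a - 3) * G ^ (a - 4) * t ^ 4
    + 6 * a * (a - 1) * (a - 2) * G ^ (a - 3) * t ^ 2 * ((1 - t ^ 2) / 2)
    + a * (a - 1) * G ^ (a - 2) * (3 * ((1 - t ^ 2) / 2) ^ 2 - 2 * t ^ 2 * (1 - t ^ 2))
    - a * G ^ (a - 1) * ((1 - t ^ 2) * (1 - 3 * t ^ 2) / 4)

section

variable {g g' : ℝ → ℝ} {z : ℝ} (a : ℝ)

theorem hasDerivAt_rpowDeriv1 (hg : HasDerivAt g (g' z) z) (hpos : 0 < g z) :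
    HasDerivAt (fun z => g z ^ a) (rpowDeriv1 a (g z) (g' z)) z :=
  (hg.rpow_const (Or.inl hpos.ne')).congr_deriv (by unfold rpowDeriv1; ring)

theorem hasDerivAt_rpowDeriv2 (hg : HasDerivAt g (g' z) z)
    (hg' : HasDerivAt g' ((1 - g' z ^ 2) / 2) z) (hpos : 0 < g z) :
    HasDerivAt (fun z => rpowDeriv1 a (g z) (g' z)) (rpowDeriv2 a (g z) (g' z)) z := by
  have h := ((hg.rpow_const (p := a - 1) (Or.inl hpos.ne')).const_mul a).fun_mul hg'
  unfold rpowDeriv1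
  exact h.congr_deriv (by unfold rpowDeriv2; ring_nf)

theorem hasDerivAt_rpowDeriv3 (hg : HasDerivAt g (g' z) z)
    (hg' : HasDerivAt g' ((1 - g' z ^ 2) / 2) z) (hpos : 0 < g z) :
    HasDerivAt (fun z => rpowDeriv2 a (g z) (g' z)) (rpowDeriv3 a (g z) (g' z)) z := by
  have hG : ∀ p : ℝ, HasDerivAt (fun z => g z ^ p) (g' z * p * g z ^ (p - 1)) z :=
    fun p => hg.rpow_const (Or.inl hpos.ne')
  have h := (((hG (a - 2)).const_mul (a * (a - 1))).fun_mul (hg'.fun_pow 2)).fun_add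
    (((hG (a - 1)).const_mul a).fun_mul (((hg'.fun_pow 2).const_sub 1).div_const 2))
  unfold rpowDeriv2
  exact h.congr_deriv (by unfold rpowDeriv3; ring_nf)

theorem hasDerivAt_rpowDeriv4 (hg : HasDerivAt g (g' z) z)
    (hg' : HasDerivAt g' ((1 - g' z ^ 2) / 2) z) (hpos : 0 < g z) :
    HasDerivAt (fun z => rpowDeriv3 a (g z) (g' z)) (rpowDeriv4 a (g z) (g' z)) z := by
  have hG : ∀ p : ℝ, HasDerivAt (fun z => g z ^ p) (g' z * p * g z ^ (p - 1)) z :=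
    fun p => hg.rpow_const (Or.inl hpos.ne')
  have hsq := ((hg'.fun_pow 2).const_sub 1).div_const 2
  have h := ((((hG (a - 3)).const_mul (a * (a - 1) * (a - 2))).fun_mul (hg'.fun_pow 3)).fun_add
    ((((hG (a - 2)).const_mul (3 * a * (a - 1))).fun_mul hg').fun_mul hsq)).fun_sub
    (((hG (a - 1)).const_mul a).fun_mul ((hg'.fun_mul ((hg'.fun_pow 2).const_sub 1)).div_const 2))
  unfold rpowDeriv3
  exact h.congr_deriv (by unfold rpowDeriv4; ring_nf)

end

theorem iteratedDeriv_rpow_of_ode {g g' : ℝ → ℝ} (a : ℝ) (hg : ∀ z, HasDerivAt g (g' z) z)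
    (hg' : ∀ z, HasDerivAt g' ((1 - g' z ^ 2) / 2) z) (hpos : ∀ z, 0 < g z) :
    iteratedDeriv 2 (fun z => g z ^ a) = (fun z => rpowDeriv2 a (g z) (g' z)) ∧
    iteratedDeriv 3 (fun z => g z ^ a) = (fun z => rpowDeriv3 a (g z) (g' z)) ∧
    iteratedDeriv 4 (fun z => g z ^ a) = (fun z => rpowDeriv4 a (g z) (g' z)) := by
  have d1 := funext fun z => (hasDerivAt_rpowDeriv1 a (hg z) (hpos z)).deriv
  have d2 := funext fun z => (hasDerivAt_rpowDeriv2 a (hg z) (hg' z) (hpos z)).deriv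
  have d3 := funext fun z => (hasDerivAt_rpowDeriv3 a (hg z) (hg' z) (hpos z)).deriv
  have d4 := funext fun z => (hasDerivAt_rpowDeriv4 a (hg z) (hg' z) (hpos z)).deriv
  have i2 : iteratedDeriv 2 (fun z => g z ^ a) = (fun z => rpowDeriv2 a (g z) (g' z)) := by
    rw [iteratedDeriv_succ, iteratedDeriv_one, d1, d2]
  have i3 : iteratedDeriv 3 (fun z => g z ^ a) = (fun z => rpowDeriv3 a (g z) (g' z)) := by
    rw [iteratedDeriv_succ, i2, d3]
  exact ⟨i2, i3, by rw [iteratedDeriv_succ, i3, d4]⟩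

noncomputable def symSoftplus (x : ℝ) : ℝ := 2 * log (2 * cosh (x / 2))

theorem log_exp_add_one_add_log_exp_neg_add_one (x : ℝ) :
    log (exp x + 1) + log (exp (-x) + 1) = symSoftplus x := by
  have hprod : (exp x + 1) * (exp (-x) + 1) = (2 * cosh (x / 2)) ^ 2 := by
    have hx : exp x = exp (x / 2) ^ 2 := by rw [← exp_nat_mul]; ring_nf
    have hnx : exp (-x) = exp (-(x / 2)) ^ 2 := by rw [← exp_nat_mul]; ring_nf
    have hinv : exp (x / 2) * exp (-(x / 2)) = 1 := by rw [← exp_add, add_neg_cancel, exp_zero]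
    rw [cosh_eq, hx, hnx]
    linear_combination (exp (x / 2) * exp (-(x / 2)) - 1) * hinv
  rw [symSoftplus, ← log_mul (by positivity) (by positivity), hprod, log_pow]
  push_cast; ring

theorem hasDerivAt_tanh_half (x : ℝ) :
    HasDerivAt (fun x => tanh (x / 2)) ((1 - tanh (x / 2) ^ 2) / 2) x := by
  have hx := (hasDerivAt_id' x).div_const 2
  have h := hx.sinh.div hx.cosh (cosh_pos _).ne'
  have htanh : (fun x => tanh (x / 2)) = fun x => sinh (x / 2) / cosh (x / 2) :=
    funext fun x => tanh_eq_sinh_div_cosh _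
  rw [htanh]
  refine h.congr_deriv ?_
  rw [tanh_eq_sinh_div_cosh]
  field_simp

theorem hasDerivAt_symSoftplus (x : ℝ) : HasDerivAt symSoftplus (tanh (x / 2)) x := by
  unfold symSoftplus
  have h := ((((hasDerivAt_id' x).div_const 2).cosh.const_mul 2).log
    (by positivity)).const_mul 2
  refine h.congr_deriv ?_
  rw [tanh_eq_sinh_div_cosh]
  field_simp

theorem symSoftplus_zero : symSoftplus 0 = 2 * log 2 := by
  simp [symSoftplus]

theorem symSoftplus_pos (x : ℝ) : 0 < symSoftplus x := by
  unfold symSoftplus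
  have := log_pos (by linarith [one_le_cosh (x / 2)] : (1 : ℝ) < 2 * cosh (x / 2))
  positivity

theorem product_stability_at_critical_eq {u : ℝ} (a : ℝ) (hu : 0 < u) :
    -((a / 4) * (-u ^ (a - 1) + 3 * (a - 1) * u ^ (a - 2)) * ((a / 2) * u ^ (a - 1))) =
      (a ^ 2 / 8) * u ^ (2 * a - 3) * (u - 3 * (a - 1)) := by
  have r1 : u ^ (a - 1) * u ^ (a - 1) = u ^ (2 * a - 3) * u := by
    rw [← rpow_add hu, ← rpow_add_one hu.ne']; ring_nf
  have r2 : u ^ (a - 2) * u ^ (a - 1) = u ^ (2 * a - 3) := by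
    rw [← rpow_add hu]; ring_nf
  linear_combination (a ^ 2 / 8) * r1 - (3 * (a - 1) * a ^ 2 / 8) * r2

/-- Exact values of the derivatives at `z = 1` of
`l_a(z) = (log(e^{z−1} + 1) + log(e^{1−z} + 1))^a` for `a ∈ (0,1]`, and the resulting
exact (strictly positive) product-stability formula. -/
theorem degree_of_regularity_loss_derivative_formulas
    (a : ℝ) (ha0 : 0 < a) (ha1 : a ≤ 1)
    (l : ℝ → ℝ)
    (hl : ∀ z : ℝ,
      l z = (Real.log (Real.exp (z - 1) + 1) + Real.log (Real.exp (1 - z) + 1)) ^ a) :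
    iteratedDeriv 2 l 1 = (a / 2) * (2 * Real.log 2) ^ (a - 1) ∧
    iteratedDeriv 3 l 1 = 0 ∧
    iteratedDeriv 4 l 1 =
      (a / 4) * (-(2 * Real.log 2) ^ (a - 1) + 3 * (a - 1) * (2 * Real.log 2) ^ (a - 2)) ∧
    3 * (iteratedDeriv 3 l 1) ^ 2 - iteratedDeriv 4 l 1 * iteratedDeriv 2 l 1 =
      (a ^ 2 / 8) * (2 * Real.log 2) ^ (2 * a - 3) * (2 * Real.log 2 - 3 * (a - 1)) ∧
    0 < (a ^ 2 / 8) * (2 * Real.log 2) ^ (2 * a - 3) * (2 * Real.log 2 - 3 * (a - 1)) := by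
  have hl_shift : l = fun z => symSoftplus (z - 1) ^ a := funext fun z => by
    rw [hl, ← neg_sub z 1, log_exp_add_one_add_log_exp_neg_add_one]
  have hshift (n : ℕ) :
      iteratedDeriv n l 1 = iteratedDeriv n (fun x => symSoftplus x ^ a) 0 := by
    rw [hl_shift, iteratedDeriv_comp_sub_const n (fun x => symSoftplus x ^ a) 1]
    simp only [sub_self]
  obtain ⟨h2, h3, h4⟩ := iteratedDeriv_rpow_of_ode a hasDerivAt_symSoftplus
    hasDerivAt_tanh_half symSoftplus_pos
  have hlog2 : 0 < 2 * log 2 := by positivity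
  have v2 : iteratedDeriv 2 l 1 = (a / 2) * (2 * log 2) ^ (a - 1) := by
    rw [hshift, h2]; simp only [rpowDeriv2, symSoftplus_zero, zero_div, tanh_zero]; ring
  have v3 : iteratedDeriv 3 l 1 = 0 := by
    rw [hshift, h3]; simp only [rpowDeriv3, zero_div, tanh_zero]; ring
  have v4 : iteratedDeriv 4 l 1 =
      (a / 4) * (-(2 * log 2) ^ (a - 1) + 3 * (a - 1) * (2 * log 2) ^ (a - 2)) := by
    rw [hshift, h4]; simp only [rpowDeriv4, symSoftplus_zero, zero_div, tanh_zero]; ring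
  refine ⟨v2, v3, v4, ?_, ?_⟩
  · rw [v2, v3, v4, ← product_stability_at_critical_eq a hlog2]; ring
  · have : 0 < 2 * log 2 - 3 * (a - 1) := by linarith
    positivity
end

section
/- Let l : ℝ → ℝ be five times continuously differentiable with l''(z*) > 0 and α_l(z*) = 3(l'''(z*))² − l''''(z*)·l''(z*) > 0 at a point z*. Define c₃(η) = (l''''(z*)/6)·(1 − η·l''(z*))·(1 + (1 − η·l''(z*))²) − (η·(l'''(z*))²·(1 − η·l''(z*)))/2. Then there exists τ₀ > 0 such that c₃(η) > 0 for all η ∈ [2/l''(z*), (2+τ₀)/l''(z*)]; in particular the minimum of c₃ over this closed interval is strictly positive. -/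
/-- Positivity of the cubic Taylor coefficient `c₃(η)` of the two-step
gradient descent displacement near a product-stable point, uniformly over learning
rates `η ∈ [2/l''(z*), (2+τ₀)/l''(z*)]`. -/
theorem cubic_coefficient_positive
    (l : ℝ → ℝ) (zs : ℝ)
    (hl : ContDiff ℝ 5 l)
    (hl2 : 0 < iteratedDeriv 2 l zs)
    (hps : 0 < 3 * (iteratedDeriv 3 l zs) ^ 2 -
        iteratedDeriv 4 l zs * iteratedDeriv 2 l zs)
    (c₃ : ℝ → ℝ)
    (hc₃ : ∀ η : ℝ, c₃ η =
      (iteratedDeriv 4 l zs / 6) * (1 - η * iteratedDeriv 2 l zs) *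
          (1 + (1 - η * iteratedDeriv 2 l zs) ^ 2) -
        (η * (iteratedDeriv 3 l zs) ^ 2 * (1 - η * iteratedDeriv 2 l zs)) / 2) :
    ∃ τ₀ > (0 : ℝ),
      ∀ η ∈ Set.Icc (2 / iteratedDeriv 2 l zs) ((2 + τ₀) / iteratedDeriv 2 l zs),
        0 < c₃ η := by
  set a := iteratedDeriv 2 l zs with ha
  set b := iteratedDeriv 3 l zs with hb
  set c := iteratedDeriv 4 l zs with hc
  have ha0 : a ≠ 0 := ne_of_gt hl2
  -- value at 2/a
  have hval : c₃ (2 / a) = (3 * b ^ 2 - c * a) / (3 * a) := by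
    rw [hc₃]; field_simp; ring
  have hpos : 0 < c₃ (2 / a) := by
    rw [hval]; positivity
  -- continuity of c₃
  have hcont : ContinuousAt c₃ (2 / a) := by
    have : c₃ = fun η => (c / 6) * (1 - η * a) * (1 + (1 - η * a) ^ 2) -
        (η * b ^ 2 * (1 - η * a)) / 2 := funext hc₃
    rw [this]
    fun_prop
  have hev : ∀ᶠ η in nhds (2 / a), 0 < c₃ η :=
    hcont.eventually (eventually_gt_nhds hpos)
  rw [Metric.eventually_nhds_iff] at hev
  obtain ⟨ε, hε, hball⟩ := hev
  refine ⟨ε * a / 2, by positivity, fun η hη => ?_⟩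
  apply hball
  rw [Real.dist_eq, abs_lt]
  obtain ⟨h1, h2⟩ := hη
  constructor
  · linarith
  · have : (2 + ε * a / 2) / a = 2 / a + ε / 2 := by
      rw [div_eq_iff ha0]; field_simp
    rw [this] at h2
    linarith
end

section
/- Let l : ℝ → ℝ be differentiable and let η > 0. Consider one gradient descent step on L(x,y) = l(xy): x' = x − η·l'(xy)·y and y' = y − η·l'(xy)·x. Then x'·y' = xy − η·(x² + y²)·l'(xy) + η²·xy·(l'(xy))². Moreover, for two consecutive gradient descent steps with iterates (x_t, y_t), (x_{t+1}, y_{t+1}), (x_{t+2}, y_{t+2}), writing z_t = x_t y_t, s_t = x_t² + y_t², g_t = l'(z_t), and h_t = g_{t+1}² + 4·g_{t+1}·g_t + g_t², the following exact identities hold: z_{t+2} − z_t = η²·h_t·z_t − η·(g_{t+1} + g_t)·(1 + η²·g_{t+1}·g_t)·s_t + η⁴·g_{t+1}²·g_t²·z_t, and s_{t+2} − s_t = η²·h_t·s_t − 4η·(g_{t+1} + g_t)·(1 + η²·g_{t+1}·g_t)·z_t + η⁴·g_{t+1}²·g_t²·s_t. -/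
/-- Exact one-step and two-step identities for the products
`z_t = x_t y_t` and sums of squares `s_t = x_t² + y_t²` under gradient descent on
`L(x,y) = l(xy)`. -/
theorem gd_product_step_identities
    (l : ℝ → ℝ) (hl : Differentiable ℝ l) (η : ℝ) (hη : 0 < η) :
    (∀ x y : ℝ,
      (x - η * deriv l (x * y) * y) * (y - η * deriv l (x * y) * x) =
        x * y - η * (x ^ 2 + y ^ 2) * deriv l (x * y) +
          η ^ 2 * (x * y) * (deriv l (x * y)) ^ 2) ∧
    (∀ x y : ℕ → ℝ,
      (∀ t, x (t + 1) = x t - η * deriv l (x t * y t) * y t) →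
      (∀ t, y (t + 1) = y t - η * deriv l (x t * y t) * x t) →
      ∀ t : ℕ,
        (x (t + 2) * y (t + 2) - x t * y t =
          η ^ 2 * ((deriv l (x (t + 1) * y (t + 1))) ^ 2 +
              4 * deriv l (x (t + 1) * y (t + 1)) * deriv l (x t * y t) +
              (deriv l (x t * y t)) ^ 2) * (x t * y t) -
            η * (deriv l (x (t + 1) * y (t + 1)) + deriv l (x t * y t)) *
              (1 + η ^ 2 * deriv l (x (t + 1) * y (t + 1)) * deriv l (x t * y t)) *
              ((x t) ^ 2 + (y t) ^ 2) +
            η ^ 4 * (deriv l (x (t + 1) * y (t + 1))) ^ 2 *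
              (deriv l (x t * y t)) ^ 2 * (x t * y t)) ∧
        ((x (t + 2)) ^ 2 + (y (t + 2)) ^ 2 - ((x t) ^ 2 + (y t) ^ 2) =
          η ^ 2 * ((deriv l (x (t + 1) * y (t + 1))) ^ 2 +
              4 * deriv l (x (t + 1) * y (t + 1)) * deriv l (x t * y t) +
              (deriv l (x t * y t)) ^ 2) * ((x t) ^ 2 + (y t) ^ 2) -
            4 * η * (deriv l (x (t + 1) * y (t + 1)) + deriv l (x t * y t)) *
              (1 + η ^ 2 * deriv l (x (t + 1) * y (t + 1)) * deriv l (x t * y t)) *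
              (x t * y t) +
            η ^ 4 * (deriv l (x (t + 1) * y (t + 1))) ^ 2 *
              (deriv l (x t * y t)) ^ 2 * ((x t) ^ 2 + (y t) ^ 2))) := by
  refine ⟨fun x y => by ring, fun x y hx hy t => ?_⟩
  have e3 := hx (t + 1); have e4 := hy (t + 1)
  have e1 := hx t; have e2 := hy t
  set g1 := deriv l (x (t + 1) * y (t + 1)) with hg1
  set g0 := deriv l (x t * y t) with hg0
  rw [e1, e2] at e3 e4
  constructor <;> rw [show t + 2 = t + 1 + 1 from rfl, e3, e4] <;> ring
end

section
/- Let l : ℝ → ℝ be differentiable and let η > 0. For the gradient descent iterates x_{t+1} = x_t − η·l'(x_t y_t)·y_t and y_{t+1} = y_t − η·l'(x_t y_t)·x_t on L(x,y) = l(xy), writing z_t = x_t y_t and s_t = x_t² + y_t², the following identity holds for all t ≥ 0: s_{t+1}² − 4·z_{t+1}² = (s_t² − 4·z_t²)·(1 − η²·(l'(z_t))²)². -/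
/-- Identity `s_{t+1}² − 4 z_{t+1}² = (s_t² − 4 z_t²)(1 − η²(l'(z_t))²)²`
for gradient descent on `L(x,y) = l(xy)`, where `z_t = x_t y_t`, `s_t = x_t² + y_t²`. -/
theorem gd_product_discriminant_identity
    (l : ℝ → ℝ) (hl : Differentiable ℝ l) (η : ℝ) (hη : 0 < η)
    (x y : ℕ → ℝ)
    (hx : ∀ t, x (t + 1) = x t - η * deriv l (x t * y t) * y t)
    (hy : ∀ t, y (t + 1) = y t - η * deriv l (x t * y t) * x t) :
    ∀ t : ℕ,
      ((x (t + 1)) ^ 2 + (y (t + 1)) ^ 2) ^ 2 - 4 * (x (t + 1) * y (t + 1)) ^ 2 =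
        (((x t) ^ 2 + (y t) ^ 2) ^ 2 - 4 * (x t * y t) ^ 2) *
          (1 - η ^ 2 * (deriv l (x t * y t)) ^ 2) ^ 2 := by
  intro t
  rw [hx t, hy t]
  ring
end

section
/- Let l : ℝ → ℝ be five times continuously differentiable with a local minimum at z* satisfying l''(z*) > 0 and α_l(z*) = 3(l'''(z*))² − l''''(z*)·l''(z*) > 0. Define D_η(z) = l'(z) + l'(z − η·l'(z)). Then there exist ρ > 0 and σ > 0 such that for all η ∈ [(2−ρ)/l''(z*), 2/l''(z*)] and all z with |z − z*| ≤ σ, the derivative of D_η satisfies |D_η'(z)| ≤ 1/η. -/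
/-!
Write `g = l'`, so that `g z* = 0` and `g'(z*) = l''(z*) =: c > 0`. The derivative of the two-step
displacement is `D_η'(z) = g'(z) + g'(z - η g(z)) (1 - η g'(z))`, a continuous function of `(η, z)`.
At the edge of stability `(η, z) = (2 / c, z*)` it equals `c + c (1 - 2) = 0`, so on a small
neighbourhood it is below `c / 2`, and `c / 2 ≤ 1 / η` whenever `0 < η ≤ 2 / c`.
-/

open Filter Topology

/-- With `g = l'`, `twoStepDisplacement g η` is `D_η`: the sum of the gradients at the two iterates
`z` and `z - η l'(z)` of gradient descent. -/
noncomputable def twoStepDisplacement (g : ℝ → ℝ) (η z : ℝ) : ℝ :=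
  g z + g (z - η * g z)

theorem hasDerivAt_twoStepDisplacement {g : ℝ → ℝ} {η z g₁ g₂ : ℝ}
    (h₁ : HasDerivAt g g₁ z) (h₂ : HasDerivAt g g₂ (z - η * g z)) :
    HasDerivAt (twoStepDisplacement g η) (g₁ + g₂ * (1 - η * g₁)) z :=
  h₁.add (h₂.comp z ((hasDerivAt_id z).sub (h₁.const_mul η)))

theorem deriv_twoStepDisplacement {g : ℝ → ℝ} (hg : Differentiable ℝ g) (η z : ℝ) :
    deriv (twoStepDisplacement g η) z =
      deriv g z + deriv g (z - η * g z) * (1 - η * deriv g z) :=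
  (hasDerivAt_twoStepDisplacement (hg z).hasDerivAt (hg _).hasDerivAt).deriv

theorem continuous_deriv_twoStepDisplacement {g : ℝ → ℝ} (hg : ContDiff ℝ 1 g) :
    Continuous fun p : ℝ × ℝ => deriv (twoStepDisplacement g p.1) p.2 := by
  have hg' : Continuous (deriv g) := hg.continuous_deriv le_rfl
  have hg0 : Continuous g := hg.continuous
  simp only [deriv_twoStepDisplacement (hg.differentiable one_ne_zero)]
  fun_prop

theorem deriv_twoStepDisplacement_two_div_deriv {g : ℝ → ℝ} {zs : ℝ} (hg : Differentiable ℝ g)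
    (hzero : g zs = 0) (hc : deriv g zs ≠ 0) :
    deriv (twoStepDisplacement g (2 / deriv g zs)) zs = 0 := by
  rw [deriv_twoStepDisplacement hg, hzero, mul_zero, sub_zero]
  field_simp
  ring

theorem exists_abs_deriv_twoStepDisplacement_le_one_div {g : ℝ → ℝ} {zs : ℝ}
    (hg : ContDiff ℝ 1 g) (hzero : g zs = 0) (hc : 0 < deriv g zs) :
    ∃ ρ > (0 : ℝ), ∃ σ > (0 : ℝ),
      ∀ η ∈ Set.Icc ((2 - ρ) / deriv g zs) (2 / deriv g zs), ∀ z : ℝ, |z - zs| ≤ σ →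
        |deriv (twoStepDisplacement g η) z| ≤ 1 / η := by
  set c := deriv g zs
  have hthreshold : deriv (twoStepDisplacement g (2 / c)) zs = 0 :=
    deriv_twoStepDisplacement_two_div_deriv (hg.differentiable one_ne_zero) hzero hc.ne'
  have hsmall : ∀ᶠ p : ℝ × ℝ in 𝓝 (2 / c, zs), |deriv (twoStepDisplacement g p.1) p.2| < c / 2 :=
    ((continuous_deriv_twoStepDisplacement hg).abs.tendsto _).eventually_lt_const
      (by rw [hthreshold, abs_zero]; exact half_pos hc)
  have hpos : ∀ᶠ p : ℝ × ℝ in 𝓝 (2 / c, zs), 0 < p.1 :=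
    (continuous_fst.tendsto _).eventually_const_lt (div_pos two_pos hc)
  obtain ⟨ε, hε, hball⟩ := Metric.eventually_nhds_iff_ball.mp (hsmall.and hpos)
  refine ⟨c * ε / 2, by positivity, ε / 2, by positivity, fun η hη z hz => ?_⟩
  have hηε : |η - 2 / c| < ε := by
    have hleft : (2 - c * ε / 2) / c = 2 / c - ε / 2 := by field_simp
    rw [abs_sub_lt_iff]
    constructor <;> linarith [hη.1, hη.2]
  have hmem : (η, z) ∈ Metric.ball (2 / c, zs) ε := by
    rw [Metric.mem_ball, Prod.dist_eq, max_lt_iff, Real.dist_eq, Real.dist_eq]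
    exact ⟨hηε, by linarith⟩
  obtain ⟨hlt, hη₀⟩ := hball _ hmem
  calc |deriv (twoStepDisplacement g η) z| ≤ c / 2 := hlt.le
    _ = 1 / (2 / c) := (one_div_div 2 c).symm
    _ ≤ 1 / η := one_div_le_one_div_of_le hη₀ hη.2

theorem two_step_derivative_bound_below_eos_general
    (l : ℝ → ℝ) (zs : ℝ)
    (hl : ContDiff ℝ 5 l) (hmin : IsLocalMin l zs)
    (hl2 : 0 < iteratedDeriv 2 l zs) :
    ∃ ρ > (0 : ℝ), ∃ σ > (0 : ℝ),
      ∀ η ∈ Set.Icc ((2 - ρ) / iteratedDeriv 2 l zs) (2 / iteratedDeriv 2 l zs),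
        ∀ z : ℝ, |z - zs| ≤ σ →
          |deriv (fun w => deriv l w + deriv l (w - η * deriv l w)) z| ≤ 1 / η := by
  have hl' : ContDiff ℝ 1 (deriv l) :=
    (contDiff_succ_iff_deriv.mp (hl.of_le (by norm_num) : ContDiff ℝ (1 + 1) l)).2.2
  rw [iteratedDeriv_succ, iteratedDeriv_one] at hl2 ⊢
  exact exists_abs_deriv_twoStepDisplacement_le_one_div hl' hmin.deriv_eq_zero hl2

/-- Just below the EoS threshold, the derivative of the two-step
displacement `D_η(z) = l'(z) + l'(z − η l'(z))` satisfies `|D_η'(z)| ≤ 1/η` near `z*`. -/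
theorem two_step_derivative_bound_below_eos
    (l : ℝ → ℝ) (zs : ℝ)
    (hl : ContDiff ℝ 5 l) (hmin : IsLocalMin l zs)
    (hl2 : 0 < iteratedDeriv 2 l zs)
    (hps : 0 < 3 * (iteratedDeriv 3 l zs) ^ 2 -
        iteratedDeriv 4 l zs * iteratedDeriv 2 l zs) :
    ∃ ρ > (0 : ℝ), ∃ σ > (0 : ℝ),
      ∀ η ∈ Set.Icc ((2 - ρ) / iteratedDeriv 2 l zs) (2 / iteratedDeriv 2 l zs),
        ∀ z : ℝ, |z - zs| ≤ σ →
          |deriv (fun w => deriv l w + deriv l (w - η * deriv l w)) z| ≤ 1 / η :=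
  two_step_derivative_bound_below_eos_general l zs hl hmin hl2
end

section
/- Let l : ℝ → ℝ be five times continuously differentiable with a local minimum at z* satisfying l''(z*) > 0 and α_l(z*) = 3(l'''(z*))² − l''''(z*)·l''(z*) > 0, and let Ẑ be a twice continuously differentiable function on a neighborhood of z* with Ẑ(z*) = 2/l''(z*), l'(z) + l'(z − Ẑ(z)·l'(z)) = 0 for all z in the neighborhood, Ẑ'(z*) = 0, and Ẑ''(z*) = 2·α_l(z*)/(3·(l''(z*))³). Define o(z) = z − Ẑ(z)·l'(z) and, for z ≠ z*, Φ(z) = (−Ẑ'(z)·l'(z)·z·(l''(o(z)) + 2/Ẑ(z)) + 2·l'(z)) / (Ẑ'(z)·l''(o(z))). Then Φ(z) tends to the limit 3·(l''(z*))³/α_l(z*) as z → z*. -/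
open Filter Topology

/-!
Since `l'(z*) = 0` and `Ẑ'(z*) = 0`, both the numerator and the denominator of `Φ` vanish at `z*`.
Dividing them by `z - z*` turns `l'(z)` and `Ẑ'(z)` into difference quotients, which tend to
`l''(z*)` and `Ẑ''(z*)`. The term of the numerator carrying `Ẑ'(z) l'(z)` vanishes to second
order, so `Φ(z) → 2 l''(z*) / (Ẑ''(z*) l''(z*)) = 2 / Ẑ''(z*) = 3 l''(z*)³ / α_l(z*)`.
-/

theorem Filter.Tendsto.div_of_div_right {α G₀ : Type*} [GroupWithZero G₀] [TopologicalSpace G₀]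
    [ContinuousInv₀ G₀] [ContinuousMul G₀] {l : Filter α} {f g h : α → G₀} {a b : G₀}
    (hf : Tendsto (fun z => f z / h z) l (𝓝 a)) (hg : Tendsto (fun z => g z / h z) l (𝓝 b))
    (hb : b ≠ 0) (hh : ∀ᶠ z in l, h z ≠ 0) :
    Tendsto (fun z => f z / g z) l (𝓝 (a / b)) :=
  (hf.div hg hb).congr' (hh.mono fun _ hz => div_div_div_cancel_right₀ hz _ _)

section DivSub

variable {𝕜 : Type*} [NontriviallyNormedField 𝕜] {f g h : 𝕜 → 𝕜} {x a b c : 𝕜}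

theorem HasDerivAt.tendsto_div_sub_of_eq_zero (hf : HasDerivAt f a x) (hfx : f x = 0) :
    Tendsto (fun z => f z / (z - x)) (𝓝[≠] x) (𝓝 a) :=
  (hasDerivAt_iff_tendsto_slope.mp hf).congr fun z => by rw [slope_def_field, hfx, sub_zero]

theorem Filter.Tendsto.tendsto_zero_of_div_sub
    (hf : Tendsto (fun z => f z / (z - x)) (𝓝[≠] x) (𝓝 a)) : Tendsto f (𝓝[≠] x) (𝓝 0) := by
  have h := hf.mul (tendsto_sub_nhds_zero_iff.mpr (tendsto_nhdsWithin_of_tendsto_nhds tendsto_id))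
  rw [mul_zero] at h
  exact h.congr' <|
    eventually_nhdsWithin_of_forall fun z hz => div_mul_cancel₀ _ (sub_ne_zero.mpr hz)

/-- With `f = Ẑ'`, `g = l'` and `h z = l''(o(z)) + 2 / Ẑ(z)` this is the numerator of `Φ`; its first
term is a product of two functions vanishing at `x`. -/
theorem tendsto_phi_numerator_div_sub (hf : Tendsto (fun z => f z / (z - x)) (𝓝[≠] x) (𝓝 a))
    (hg : Tendsto (fun z => g z / (z - x)) (𝓝[≠] x) (𝓝 b)) (hh : Tendsto h (𝓝[≠] x) (𝓝 c)) :
    Tendsto (fun z => (-(f z) * g z * z * h z + 2 * g z) / (z - x)) (𝓝[≠] x) (𝓝 (2 * b)) := by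
  have key := (((hf.neg.mul hg.tendsto_zero_of_div_sub).mul
    (tendsto_nhdsWithin_of_tendsto_nhds tendsto_id)).mul hh).add (hg.const_mul 2)
  rw [mul_zero, zero_mul, zero_mul, zero_add] at key
  exact key.congr fun z => by simp only [id]; ring

end DivSub

theorem tendsto_deriv_div_sub_of_isLocalMin {l : ℝ → ℝ} {x : ℝ}
    (hl : DifferentiableAt ℝ (deriv l) x) (hmin : IsLocalMin l x) :
    Tendsto (fun z => deriv l z / (z - x)) (𝓝[≠] x) (𝓝 (iteratedDeriv 2 l x)) := by
  simpa [iteratedDeriv_succ] using hl.hasDerivAt.tendsto_div_sub_of_eq_zero hmin.deriv_eq_zero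

theorem tendsto_iteratedDeriv_two_sub_mul_deriv {l η : ℝ → ℝ} {x : ℝ} (hl : ContDiff ℝ 2 l)
    (hη : ContinuousAt η x) (hx : deriv l x = 0) :
    Tendsto (fun z => iteratedDeriv 2 l (z - η z * deriv l z)) (𝓝 x) (𝓝 (iteratedDeriv 2 l x)) := by
  have hl' : Continuous (deriv l) := by simpa using hl.continuous_iteratedDeriv 1 (by norm_num)
  have hstep : Tendsto (fun z => z - η z * deriv l z) (𝓝 x) (𝓝 x) := by
    simpa [hx] using tendsto_id.sub (hη.tendsto.mul (hl'.tendsto x))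
  exact ((hl.continuous_iteratedDeriv 2 le_rfl).tendsto x).comp hstep

theorem phi_limit_at_minimum_general
    (l : ℝ → ℝ) (zs : ℝ)
    (hl : ContDiff ℝ 5 l) (hmin : IsLocalMin l zs)
    (hl2 : 0 < iteratedDeriv 2 l zs)
    (hps : 0 < 3 * (iteratedDeriv 3 l zs) ^ 2 -
        iteratedDeriv 4 l zs * iteratedDeriv 2 l zs)
    (σ : ℝ) (hσ : 0 < σ) (Z : ℝ → ℝ)
    (hZreg : ContDiffOn ℝ 2 Z (Set.Ioo (zs - σ) (zs + σ)))
    (hZstar : Z zs = 2 / iteratedDeriv 2 l zs)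
    (hZ' : deriv Z zs = 0)
    (hZ'' : deriv (deriv Z) zs =
      2 * (3 * (iteratedDeriv 3 l zs) ^ 2 -
            iteratedDeriv 4 l zs * iteratedDeriv 2 l zs) /
        (3 * (iteratedDeriv 2 l zs) ^ 3)) :
    Tendsto
      (fun z : ℝ =>
        (-(deriv Z z) * deriv l z * z *
              (iteratedDeriv 2 l (z - Z z * deriv l z) + 2 / Z z) +
            2 * deriv l z) /
          (deriv Z z * iteratedDeriv 2 l (z - Z z * deriv l z)))
      (𝓝[≠] zs)
      (𝓝 (3 * (iteratedDeriv 2 l zs) ^ 3 /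
        (3 * (iteratedDeriv 3 l zs) ^ 2 -
          iteratedDeriv 4 l zs * iteratedDeriv 2 l zs))) := by
  set a := iteratedDeriv 2 l zs
  have hU : Set.Ioo (zs - σ) (zs + σ) ∈ 𝓝 zs := Ioo_mem_nhds (by linarith) (by linarith)
  have hZ_cont : ContinuousAt Z zs := hZreg.continuousOn.continuousAt hU
  have hZ'_diff : DifferentiableAt ℝ (deriv Z) zs :=
    ((hZreg.deriv_of_isOpen isOpen_Ioo le_rfl).differentiableOn one_ne_zero).differentiableAt hU
  have hl'_diff : DifferentiableAt ℝ (deriv l) zs := by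
    simpa using hl.differentiable_iteratedDeriv 1 (by norm_num) zs
  have hslope_l := tendsto_deriv_div_sub_of_isLocalMin hl'_diff hmin
  have hslope_Z := hZ'_diff.hasDerivAt.tendsto_div_sub_of_eq_zero hZ'
  have hcurv := tendsto_iteratedDeriv_two_sub_mul_deriv (hl.of_le (by norm_num)) hZ_cont
    hmin.deriv_eq_zero
  have h2_div_Z : Tendsto (fun z => 2 / Z z) (𝓝 zs) (𝓝 a) := by
    have h := tendsto_const_nhds (x := (2 : ℝ)) |>.div hZ_cont.tendsto (hZstar ▸ by positivity)
    rwa [hZstar, div_div_cancel₀ two_ne_zero] at h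
  have hnum := tendsto_phi_numerator_div_sub hslope_Z hslope_l
    ((hcurv.add h2_div_Z).mono_left nhdsWithin_le_nhds)
  have hden : Tendsto (fun z => deriv Z z * iteratedDeriv 2 l (z - Z z * deriv l z) / (z - zs))
      (𝓝[≠] zs) (𝓝 (deriv (deriv Z) zs * a)) :=
    (hslope_Z.mul (hcurv.mono_left nhdsWithin_le_nhds)).congr fun z => by ring
  have hval : 2 * a / (deriv (deriv Z) zs * a) = 3 * a ^ 3 /
      (3 * (iteratedDeriv 3 l zs) ^ 2 - iteratedDeriv 4 l zs * a) := by
    rw [hZ'']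
    field_simp
  rw [← hval]
  exact hnum.div_of_div_right hden (by rw [hZ'']; positivity)
    (eventually_nhdsWithin_of_forall fun z hz => sub_ne_zero.mpr hz)

/-- The function `Φ` built from the inverse bifurcation map `Ẑ` extends
continuously to `z*` with limit `3 l''(z*)³ / α_l(z*)`. -/
theorem phi_limit_at_minimum
    (l : ℝ → ℝ) (zs : ℝ)
    (hl : ContDiff ℝ 5 l) (hmin : IsLocalMin l zs)
    (hl2 : 0 < iteratedDeriv 2 l zs)
    (hps : 0 < 3 * (iteratedDeriv 3 l zs) ^ 2 -
        iteratedDeriv 4 l zs * iteratedDeriv 2 l zs)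
    (σ : ℝ) (hσ : 0 < σ) (Z : ℝ → ℝ)
    (hZreg : ContDiffOn ℝ 2 Z (Set.Ioo (zs - σ) (zs + σ)))
    (hZstar : Z zs = 2 / iteratedDeriv 2 l zs)
    (hZfix : ∀ z ∈ Set.Ioo (zs - σ) (zs + σ),
      deriv l z + deriv l (z - Z z * deriv l z) = 0)
    (hZ' : deriv Z zs = 0)
    (hZ'' : deriv (deriv Z) zs =
      2 * (3 * (iteratedDeriv 3 l zs) ^ 2 -
            iteratedDeriv 4 l zs * iteratedDeriv 2 l zs) /
        (3 * (iteratedDeriv 2 l zs) ^ 3)) :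
    Tendsto
      (fun z : ℝ =>
        (-(deriv Z z) * deriv l z * z *
              (iteratedDeriv 2 l (z - Z z * deriv l z) + 2 / Z z) +
            2 * deriv l z) /
          (deriv Z z * iteratedDeriv 2 l (z - Z z * deriv l z)))
      (𝓝[≠] zs)
      (𝓝 (3 * (iteratedDeriv 2 l zs) ^ 3 /
        (3 * (iteratedDeriv 3 l zs) ^ 2 -
          iteratedDeriv 4 l zs * iteratedDeriv 2 l zs))) :=
  phi_limit_at_minimum_general l zs hl hmin hl2 hps σ hσ Z hZreg hZstar hZ' hZ''
end
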